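/- Let u : ℝ → ℝ be four times differentiable on an open interval J ⊆ (0,∞) with 1 + u'(x) ≠ 0 for all x ∈ J, and suppose u satisfies u⁗(x) = 6·u''(x)·((1 + u'(x))·u'''(x) − u''(x)²)/(1 + u'(x))² for all x ∈ J. Define v(t) := 1/t + u(1/t). Then for every t > 0 with 1/t ∈ J one has v'(t) ≠ 0 and v⁗(t) = 6·v''(t)·v'''(t)/v'(t) − 6·v''(t)³/v'(t)². -/

import Mathlib

/-!
Put `w x = x + u x`, so that `v t = w (1/t)`. Since `w' = 1 + u'` and `w⁽ᵏ⁾ = u⁽ᵏ⁾` for `k ≥ 2`,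
the equation for `u` says exactly that `w` satisfies the canonical equation
`w⁗ = 6 w'' w''' / w' - 6 w''³ / w'²`, and it remains to see that this equation is invariant
under `t ↦ 1/t`. With `y = 1/t`, the derivatives of `w (1/t)` are obtained by iterating
`φ ↦ -y² φ'` on `w`:
`v' = -y² w'`, `v'' = 2y³ w' + y⁴ w''`, `v''' = -(6y⁴ w' + 6y⁵ w'' + y⁶ w''')`,
`v⁗ = 24y⁵ w' + 36y⁶ w'' + 12y⁷ w''' + y⁸ w⁗`,
and substituting these into the canonical equation leaves a rational identity.
-/

open Filter Topology

section

variable {𝕜 : Type*} [NontriviallyNormedField 𝕜] {F : Type*} [NormedAddCommGroup F]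
  [NormedSpace 𝕜 F]

theorem Filter.EventuallyEq.iterate_deriv {f g : 𝕜 → F} {x : 𝕜} (h : f =ᶠ[𝓝 x] g) (n : ℕ) :
    deriv^[n] f =ᶠ[𝓝 x] deriv^[n] g := by
  induction n with
  | zero => exact h
  | succ n ih => simpa only [Function.iterate_succ_apply'] using ih.deriv

theorem hasDerivAt_iterate_deriv {f : 𝕜 → F} {k : ℕ} {x : 𝕜}
    (h : DifferentiableAt 𝕜 (deriv^[k] f) x) :
    HasDerivAt (deriv^[k] f) (deriv^[k + 1] f x) x := by
  rw [Function.iterate_succ_apply']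
  exact h.hasDerivAt

theorem iterate_deriv_const_add (c : F) (f : 𝕜 → F) (k : ℕ) :
    deriv^[k + 1] (fun y => c + f y) = deriv^[k + 1] f := by
  rw [Function.iterate_succ_apply, Function.iterate_succ_apply, deriv_const_add']

end

noncomputable def invDeriv (φ : ℝ → ℝ) (y : ℝ) : ℝ := -y ^ 2 * deriv φ y

theorem hasDerivAt_comp_inv {φ : ℝ → ℝ} {t : ℝ} (ht : t ≠ 0)
    (hφ : DifferentiableAt ℝ φ t⁻¹) : HasDerivAt (fun x => φ x⁻¹) (invDeriv φ t⁻¹) t :=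
  (hφ.hasDerivAt.comp t (hasDerivAt_inv ht)).congr_deriv (by rw [invDeriv, inv_pow]; ring)

theorem isOpen_inv_preimage {U : Set ℝ} (hU : IsOpen U) : IsOpen {t : ℝ | t ≠ 0 ∧ t⁻¹ ∈ U} :=
  continuousOn_inv₀.isOpen_inter_preimage isOpen_compl_singleton hU

theorem iterate_deriv_comp_inv {φ : ℝ → ℝ} {U : Set ℝ} (hU : IsOpen U) {n : ℕ}
    (hφ : ∀ k < n, ∀ y ∈ U, DifferentiableAt ℝ (invDeriv^[k] φ) y) {t : ℝ} (ht : t ≠ 0)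
    (htU : t⁻¹ ∈ U) : deriv^[n] (fun x => φ x⁻¹) t = invDeriv^[n] φ t⁻¹ := by
  induction n generalizing t with
  | zero => rfl
  | succ n ih =>
    have hloc : deriv^[n] (fun x => φ x⁻¹) =ᶠ[𝓝 t] fun x => invDeriv^[n] φ x⁻¹ :=
      eventually_of_mem ((isOpen_inv_preimage hU).mem_nhds ⟨ht, htU⟩)
        fun x hx => ih (fun k hk => hφ k (by omega)) hx.1 hx.2
    rw [Function.iterate_succ_apply', Function.iterate_succ_apply', hloc.deriv_eq]
    exact (hasDerivAt_comp_inv ht (hφ n n.lt_succ_self _ htU)).deriv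

theorem iterate_invDeriv_succ_apply {φ : ℝ → ℝ} {k : ℕ} {y a : ℝ}
    (h : HasDerivAt (invDeriv^[k] φ) a y) : invDeriv^[k + 1] φ y = -y ^ 2 * a := by
  rw [Function.iterate_succ_apply', invDeriv, h.deriv]

section InvDerivIterates

variable {w : ℝ → ℝ} {U : Set ℝ} {y : ℝ}

theorem hasDerivAt_iterate_invDeriv_one (hw : DifferentiableAt ℝ (deriv w) y) :
    HasDerivAt (invDeriv^[1] w) (-(2 * y * deriv w y + y ^ 2 * deriv^[2] w y)) y :=
  ((hasDerivAt_pow 2 y).fun_neg.fun_mul (hasDerivAt_iterate_deriv (k := 1) hw)).congr_deriv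
    (by norm_num; ring)

theorem hasDerivAt_iterate_invDeriv_two (hU : IsOpen U)
    (hw : ∀ k < 3, ∀ y ∈ U, DifferentiableAt ℝ (deriv^[k] w) y) (hy : y ∈ U) :
    HasDerivAt (invDeriv^[2] w)
      (6 * y ^ 2 * deriv w y + 6 * y ^ 3 * deriv^[2] w y + y ^ 4 * deriv^[3] w y) y := by
  have d1 := hasDerivAt_iterate_deriv (k := 1) (hw 1 (by norm_num) y hy)
  have d2 := hasDerivAt_iterate_deriv (k := 2) (hw 2 (by norm_num) y hy)
  have hloc : invDeriv^[2] w =ᶠ[𝓝 y] fun z =>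
      2 * (z ^ 3 * deriv^[1] w z) + z ^ 4 * deriv^[2] w z :=
    eventually_of_mem (hU.mem_nhds hy) fun z hz => by
      rw [iterate_invDeriv_succ_apply
        (hasDerivAt_iterate_invDeriv_one (hw 1 (by norm_num) z hz))]
      simp only [Function.iterate_succ_apply', Function.iterate_zero_apply]
      ring
  refine ((((hasDerivAt_pow 3 y).fun_mul d1).const_mul 2).fun_add
    ((hasDerivAt_pow 4 y).fun_mul d2)).congr_of_eventuallyEq hloc |>.congr_deriv ?_
  norm_num
  ring

theorem hasDerivAt_iterate_invDeriv_three (hU : IsOpen U)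
    (hw : ∀ k < 4, ∀ y ∈ U, DifferentiableAt ℝ (deriv^[k] w) y) (hy : y ∈ U) :
    HasDerivAt (invDeriv^[3] w)
      (-(24 * y ^ 3 * deriv w y + 36 * y ^ 4 * deriv^[2] w y + 12 * y ^ 5 * deriv^[3] w y
        + y ^ 6 * deriv^[4] w y)) y := by
  have d1 := hasDerivAt_iterate_deriv (k := 1) (hw 1 (by norm_num) y hy)
  have d2 := hasDerivAt_iterate_deriv (k := 2) (hw 2 (by norm_num) y hy)
  have d3 := hasDerivAt_iterate_deriv (k := 3) (hw 3 (by norm_num) y hy)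
  have hloc : invDeriv^[3] w =ᶠ[𝓝 y] fun z =>
      -(6 * (z ^ 4 * deriv^[1] w z) + 6 * (z ^ 5 * deriv^[2] w z) + z ^ 6 * deriv^[3] w z) :=
    eventually_of_mem (hU.mem_nhds hy) fun z hz => by
      rw [iterate_invDeriv_succ_apply
        (hasDerivAt_iterate_invDeriv_two hU (fun k hk => hw k (by omega)) hz)]
      simp only [Function.iterate_succ_apply', Function.iterate_zero_apply]
      ring
  refine (((((hasDerivAt_pow 4 y).fun_mul d1).const_mul 6).fun_add
    (((hasDerivAt_pow 5 y).fun_mul d2).const_mul 6)).fun_add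
    ((hasDerivAt_pow 6 y).fun_mul d3)).fun_neg.congr_of_eventuallyEq hloc |>.congr_deriv ?_
  norm_num
  ring

end InvDerivIterates

def CanonicalODEAt (f : ℝ → ℝ) (x : ℝ) : Prop :=
  deriv^[4] f x =
    6 * deriv^[2] f x * deriv^[3] f x / deriv f x - 6 * (deriv^[2] f x) ^ 3 / (deriv f x) ^ 2

theorem canonicalODEAt_comp_inv {w : ℝ → ℝ} {U : Set ℝ} (hU : IsOpen U)
    (hw : ∀ k < 4, ∀ y ∈ U, DifferentiableAt ℝ (deriv^[k] w) y) {t : ℝ} (ht : t ≠ 0)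
    (htU : t⁻¹ ∈ U) (hw₁ : deriv w t⁻¹ ≠ 0) (h : CanonicalODEAt w t⁻¹) :
    deriv (fun x => w x⁻¹) t ≠ 0 ∧ CanonicalODEAt (fun x => w x⁻¹) t := by
  have hdiff : ∀ k < 4, ∀ y ∈ U, DifferentiableAt ℝ (invDeriv^[k] w) y := by
    intro k hk y hy
    interval_cases k
    · exact hw 0 (by norm_num) y hy
    · exact (hasDerivAt_iterate_invDeriv_one (hw 1 (by norm_num) y hy)).differentiableAt
    · exact
        (hasDerivAt_iterate_invDeriv_two hU (fun k hk => hw k (by omega)) hy).differentiableAt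
    · exact (hasDerivAt_iterate_invDeriv_three hU hw hy).differentiableAt
  have hderiv (n : ℕ) (hn : n ≤ 4) :=
    iterate_deriv_comp_inv hU (fun k hk => hdiff k (by omega)) ht htU (n := n)
  have g1 : deriv (fun x => w x⁻¹) t = -t⁻¹ ^ 2 * deriv w t⁻¹ := hderiv 1 (by norm_num)
  have g2 := (hderiv 2 (by norm_num)).trans
    (iterate_invDeriv_succ_apply (hasDerivAt_iterate_invDeriv_one (hw 1 (by norm_num) _ htU)))
  have g3 := (hderiv 3 (by norm_num)).trans
    (iterate_invDeriv_succ_apply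
      (hasDerivAt_iterate_invDeriv_two hU (fun k hk => hw k (by omega)) htU))
  have g4 := (hderiv 4 (by norm_num)).trans
    (iterate_invDeriv_succ_apply (hasDerivAt_iterate_invDeriv_three hU hw htU))
  have hy : t⁻¹ ≠ 0 := inv_ne_zero ht
  refine ⟨g1 ▸ mul_ne_zero (by simpa using hy) hw₁, ?_⟩
  unfold CanonicalODEAt at h ⊢
  rw [g1, g2, g3, g4, h]
  generalize t⁻¹ = y at hy hw₁ ⊢
  generalize deriv w y = a at hw₁ ⊢
  field_simp
  ring

section IdAdd

variable {u : ℝ → ℝ} {x : ℝ}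

theorem deriv_id_add (hu : DifferentiableAt ℝ u x) :
    deriv (fun y => y + u y) x = 1 + deriv u x :=
  (hasDerivAt_id x |>.add hu.hasDerivAt).deriv

theorem deriv_id_add_eventuallyEq (hu : ∀ᶠ y in 𝓝 x, DifferentiableAt ℝ u y) :
    deriv (fun y => y + u y) =ᶠ[𝓝 x] fun y => 1 + deriv u y :=
  hu.mono fun _ hy => deriv_id_add hy

theorem iterate_deriv_id_add_eventuallyEq (hu : ∀ᶠ y in 𝓝 x, DifferentiableAt ℝ u y) (k : ℕ) :
    deriv^[k + 2] (fun y => y + u y) =ᶠ[𝓝 x] deriv^[k + 2] u := by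
  have h := (deriv_id_add_eventuallyEq hu).iterate_deriv (k + 1)
  rw [iterate_deriv_const_add] at h
  exact h

theorem differentiableAt_iterate_deriv_id_add (hu : ∀ᶠ y in 𝓝 x, DifferentiableAt ℝ u y) :
    ∀ k, DifferentiableAt ℝ (deriv^[k] u) x → DifferentiableAt ℝ (deriv^[k] fun y => y + u y) x
  | 0, hk => differentiableAt_id.add hk
  | 1, hk => (hk.const_add 1).congr_of_eventuallyEq (deriv_id_add_eventuallyEq hu)
  | k + 2, hk => hk.congr_of_eventuallyEq (iterate_deriv_id_add_eventuallyEq hu k)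

theorem canonicalODEAt_id_add (hu : ∀ᶠ y in 𝓝 x, DifferentiableAt ℝ u y)
    (hne : 1 + deriv u x ≠ 0)
    (hode : deriv^[4] u x =
      6 * deriv^[2] u x * ((1 + deriv u x) * deriv^[3] u x - (deriv^[2] u x) ^ 2)
        / (1 + deriv u x) ^ 2) :
    CanonicalODEAt (fun y => y + u y) x := by
  have e2 : deriv^[2] (fun y => y + u y) x = deriv^[2] u x :=
    (iterate_deriv_id_add_eventuallyEq hu 0).eq_of_nhds
  have e3 : deriv^[3] (fun y => y + u y) x = deriv^[3] u x :=
    (iterate_deriv_id_add_eventuallyEq hu 1).eq_of_nhds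
  have e4 : deriv^[4] (fun y => y + u y) x = deriv^[4] u x :=
    (iterate_deriv_id_add_eventuallyEq hu 2).eq_of_nhds
  unfold CanonicalODEAt
  rw [deriv_id_add hu.self_of_nhds, e2, e3, e4, hode]
  field_simp

end IdAdd

theorem stmt_8 (u : ℝ → ℝ) (J : Set ℝ)
    (hJ : ∃ a b : ℝ, J = Set.Ioo a b)
    (hd1 : ∀ x ∈ J, DifferentiableAt ℝ u x)
    (hd2 : ∀ x ∈ J, DifferentiableAt ℝ (deriv u) x)
    (hd3 : ∀ x ∈ J, DifferentiableAt ℝ (deriv^[2] u) x)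
    (hd4 : ∀ x ∈ J, DifferentiableAt ℝ (deriv^[3] u) x)
    (hne : ∀ x ∈ J, 1 + deriv u x ≠ 0)
    (hode : ∀ x ∈ J, deriv^[4] u x =
      6 * deriv^[2] u x * ((1 + deriv u x) * deriv^[3] u x - (deriv^[2] u x) ^ 2)
        / (1 + deriv u x) ^ 2)
    (v : ℝ → ℝ) (hv : ∀ t, v t = 1 / t + u (1 / t)) :
    ∀ t : ℝ, 0 < t → 1 / t ∈ J →
      deriv v t ≠ 0 ∧
        deriv^[4] v t =
          6 * deriv^[2] v t * deriv^[3] v t / deriv v t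
            - 6 * (deriv^[2] v t) ^ 3 / (deriv v t) ^ 2 := by
  intro t ht htJ
  have hJ_open : IsOpen J := by
    obtain ⟨a, b, rfl⟩ := hJ
    exact isOpen_Ioo
  have hv_eq : v = fun s => (fun x => x + u x) s⁻¹ := funext fun s => by simp [hv]
  have hu : ∀ x ∈ J, ∀ᶠ y in 𝓝 x, DifferentiableAt ℝ u y :=
    fun x hx => eventually_of_mem (hJ_open.mem_nhds hx) hd1
  have hw : ∀ k < 4, ∀ x ∈ J, DifferentiableAt ℝ (deriv^[k] fun y => y + u y) x := by
    intro k hk x hx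
    refine differentiableAt_iterate_deriv_id_add (hu x hx) k ?_
    interval_cases k
    exacts [hd1 x hx, hd2 x hx, hd3 x hx, hd4 x hx]
  rw [one_div] at htJ
  rw [hv_eq]
  exact canonicalODEAt_comp_inv hJ_open hw ht.ne' htJ
    ((deriv_id_add (hd1 _ htJ)).symm ▸ hne _ htJ)
    (canonicalODEAt_id_add (hu _ htJ) (hne _ htJ) (hode _ htJ))
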